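/- arXiv:math/0403514 — 2 statements merged into one kernel-verified Lean document; each statement's English description precedes it below -/
import Mathlib

section
/- Let G be a finite group with a subgroup H such that H has an ordered generating system, gcd([G:H], |H|) = 1, and the index [G:H] is a power p^k of a prime p. Then G has an ordered generating system. -/
/-!
An ordered generating system of `G` is the same as a tuple `(a, m)` whose product map
`i ↦ a₀ ^ i₀ ⋯ aₙ₋₁ ^ iₙ₋₁` is a bijection onto `G`. Concatenating a tuple whose products form a
left transversal of `H` with an ordered generating system of `H` gives one of `G`. A subgroup `P`
of order `p ^ k = [G : H]`, which exists by Sylow's theorem, meets `H` trivially by coprimality,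
so it is a complement of `H`. Finally every finite `p`-group has an ordered generating system:
split off the cyclic normal subgroup generated by a nontrivial central element and induct on the
order.
-/

/-- `(a, m)` is an *ordered generating system* of the group `G` if every `m k` is positive
and every `g : G` has a unique representation `g = a 0 ^ i 0 * a 1 ^ i 1 * ⋯ * a (n-1) ^ i (n-1)`
with `0 ≤ i k < m k` for all `k`. -/
def IsOGS {G : Type*} [Group G] {n : ℕ} (a : Fin n → G) (m : Fin n → ℕ) : Prop :=
  (∀ k, 0 < m k) ∧
    ∀ g : G, ∃! i : (k : Fin n) → Fin (m k),
      g = (List.ofFn fun k => a k ^ ((i k : ℕ))).prod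

/-- A group `G` has an ordered generating system if some tuple of elements together with
some bounds forms one. -/
def HasOGS (G : Type*) [Group G] : Prop :=
  ∃ (n : ℕ) (a : Fin n → G) (m : Fin n → ℕ), IsOGS a m

open Function

section

variable {G G' : Type*} [Group G] [Group G']

def ogsProd {n : ℕ} (a : Fin n → G) (m : Fin n → ℕ) (i : (k : Fin n) → Fin (m k)) : G :=
  (List.ofFn fun k => a k ^ (i k : ℕ)).prod

theorem hasOGS_iff_exists_bijective_ogsProd :
    HasOGS G ↔ ∃ (n : ℕ) (a : Fin n → G) (m : Fin n → ℕ), Bijective (ogsProd a m) := by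
  simp only [HasOGS, IsOGS, bijective_iff_existsUnique, ogsProd, eq_comm (a := (_ : G))]
  refine exists_congr fun n => exists_congr fun a => exists_congr fun m =>
    and_iff_right_of_imp fun h k => Nat.pos_of_ne_zero fun hk => ?_
  obtain ⟨i, -⟩ := h 1
  exact (hk ▸ i k).elim0

theorem map_ogsProd (f : G →* G') {n : ℕ} (a : Fin n → G) (m : Fin n → ℕ)
    (i : (k : Fin n) → Fin (m k)) : f (ogsProd a m i) = ogsProd (f ∘ a) m i := by
  simp [ogsProd, map_list_prod, List.map_ofFn, Function.comp_def]

@[simp]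
theorem Subgroup.coe_ogsProd {H : Subgroup G} {n : ℕ} (b : Fin n → H) (m : Fin n → ℕ)
    (i : (k : Fin n) → Fin (m k)) : ((ogsProd b m i : H) : G) = ogsProd (fun k => (b k : G)) m i :=
  map_ogsProd H.subtype b m i

def ogsIndexAppendEquiv {n n' : ℕ} (m : Fin n → ℕ) (l : Fin n' → ℕ) :
    ((t : Fin (n + n')) → Fin (Fin.append m l t)) ≃
      ((k : Fin n) → Fin (m k)) × ((k : Fin n') → Fin (l k)) where
  toFun I :=
    (fun k => Fin.cast (Fin.append_left m l k) (I (Fin.castAdd n' k)),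
      fun k => Fin.cast (Fin.append_right m l k) (I (Fin.natAdd n k)))
  invFun q :=
    Fin.addCases (motive := fun t => Fin (Fin.append m l t))
      (fun k => Fin.cast (Fin.append_left m l k).symm (q.1 k))
      (fun k => Fin.cast (Fin.append_right m l k).symm (q.2 k))
  left_inv I := by
    funext t
    refine Fin.addCases (fun k => ?_) (fun k => ?_) t <;> exact Fin.ext (by simp)
  right_inv q := by
    refine Prod.ext ?_ ?_ <;> exact funext fun k => Fin.ext (by simp)

theorem ogsProd_append {n n' : ℕ} (a : Fin n → G) (m : Fin n → ℕ) (b : Fin n' → G)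
    (l : Fin n' → ℕ) (I : (t : Fin (n + n')) → Fin (Fin.append m l t)) :
    ogsProd (Fin.append a b) (Fin.append m l) I =
      ogsProd a m (ogsIndexAppendEquiv m l I).1 * ogsProd b l (ogsIndexAppendEquiv m l I).2 := by
  simp only [ogsProd, ogsIndexAppendEquiv, Equiv.coe_fn_mk, List.ofFn_add, List.prod_append,
    Fin.append_left', Fin.append_right, Fin.val_cast, mul_left_inj]
  rfl

theorem bijective_ogsProd_append {n n' : ℕ} {a : Fin n → G} {m : Fin n → ℕ} {b : Fin n' → G}
    {l : Fin n' → ℕ}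
    (h : Bijective fun q : ((k : Fin n) → Fin (m k)) × ((k : Fin n') → Fin (l k)) =>
      ogsProd a m q.1 * ogsProd b l q.2) :
    Bijective (ogsProd (Fin.append a b) (Fin.append m l)) := by
  convert h.comp (ogsIndexAppendEquiv m l).bijective using 1
  exact funext (ogsProd_append a m b l)

theorem bijective_mul_of_bijective_quotientMk {ι : Type*} {H : Subgroup G} {f : ι → G}
    (hf : Bijective fun i => (f i : G ⧸ H)) : Bijective fun q : ι × H => f q.1 * q.2 := by
  refine ⟨fun ⟨i, h⟩ ⟨i', h'⟩ heq => ?_, fun g => ?_⟩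
  · have hi : i = i' := hf.injective <| by
      simpa [QuotientGroup.mk_mul_of_mem _ h.2, QuotientGroup.mk_mul_of_mem _ h'.2] using
        congrArg (QuotientGroup.mk (s := H)) heq
    subst hi
    exact Prod.ext rfl (Subtype.ext (mul_left_cancel heq))
  · obtain ⟨i, hi⟩ := hf.surjective g
    exact ⟨(i, ⟨(f i)⁻¹ * g, QuotientGroup.eq.mp hi⟩), mul_inv_cancel_left _ _⟩

theorem HasOGS.of_bijective_quotientMk {H : Subgroup G} (hH : HasOGS H) {n : ℕ} {a : Fin n → G}
    {m : Fin n → ℕ} (h : Bijective fun i => ((ogsProd a m i : G) : G ⧸ H)) : HasOGS G := by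
  obtain ⟨n', b, l, hb⟩ := hasOGS_iff_exists_bijective_ogsProd.mp hH
  refine hasOGS_iff_exists_bijective_ogsProd.mpr
    ⟨_, Fin.append a fun k => (b k : G), Fin.append m l, bijective_ogsProd_append ?_⟩
  convert (bijective_mul_of_bijective_quotientMk h).comp (bijective_id.prodMap hb) using 1
  funext q
  simp

theorem HasOGS.of_isCyclic [Finite G] [IsCyclic G] : HasOGS G := by
  obtain ⟨g, hg⟩ := IsCyclic.exists_generator (α := G)
  have horder : orderOf g = Nat.card G := orderOf_eq_card_of_forall_mem_zpowers hg
  refine hasOGS_iff_exists_bijective_ogsProd.mpr ⟨1, fun _ => g, fun _ => Nat.card G, ?_⟩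
  rw [Nat.bijective_iff_injective_and_card]
  refine ⟨fun i j hij => funext fun k => ?_, by simp⟩
  have hk : k = 0 := Subsingleton.elim _ _
  subst hk
  refine Fin.ext (pow_injOn_Iio_orderOf ?_ ?_ (by simpa [ogsProd] using hij)) <;> simp [horder]

theorem HasOGS.of_normal {N : Subgroup G} [N.Normal] (hN : HasOGS N) (hQ : HasOGS (G ⧸ N)) :
    HasOGS G := by
  obtain ⟨n, a, m, ha⟩ := hasOGS_iff_exists_bijective_ogsProd.mp hQ
  refine HasOGS.of_bijective_quotientMk hN (a := fun k => (a k).out) (m := m) ?_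
  convert ha using 2 with i
  rw [← QuotientGroup.mk'_apply, map_ogsProd]
  congr 1
  funext k
  simp

theorem IsPGroup.hasOGS {p : ℕ} [Fact p.Prime] [Finite G] (hG : IsPGroup p G) : HasOGS G := by
  induction h : Nat.card G using Nat.strong_induction_on generalizing G with
  | _ c IH =>
  rcases subsingleton_or_nontrivial G with _ | _
  · exact HasOGS.of_isCyclic
  have := hG.center_nontrivial
  obtain ⟨⟨g, hgc⟩, hg⟩ := exists_ne (1 : Subgroup.center G)
  have : (Subgroup.zpowers g).Normal := ⟨fun x hx y => by
    rwa [Subgroup.mem_center_iff.mp (Subgroup.zpowers_le.mpr hgc hx) y, mul_inv_cancel_right]⟩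
  have hcard : 1 < Nat.card (Subgroup.zpowers g) :=
    (Subgroup.one_lt_card_iff_ne_bot _).mpr (Subgroup.zpowers_ne_bot.mpr fun h => hg (by simp [h]))
  refine HasOGS.of_normal HasOGS.of_isCyclic (IH _ ?_ (hG.to_quotient (Subgroup.zpowers g)) rfl)
  rw [← h, (Subgroup.zpowers g).card_eq_card_quotient_mul_card_subgroup]
  exact lt_mul_right Nat.card_pos hcard

theorem HasOGS.of_isComplement' {K H : Subgroup G} (hK : HasOGS K) (hH : HasOGS H)
    (h : K.IsComplement' H) : HasOGS G := by
  obtain ⟨n, b, l, hb⟩ := hasOGS_iff_exists_bijective_ogsProd.mp hK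
  refine HasOGS.of_bijective_quotientMk hH (a := fun k => (b k : G)) (m := l) ?_
  convert (Subgroup.isComplement_subgroup_right_iff_bijective.mp h).comp hb using 1
  funext i
  simp

end

theorem hasOGS_of_prime_power_index {G : Type*} [Group G] [Fintype G]
    (H : Subgroup G) (hH : HasOGS H)
    (hcop : Nat.Coprime H.index (Nat.card H))
    (p k : ℕ) (hp : p.Prime) (hidx : H.index = p ^ k) :
    HasOGS G := by
  have : Fact p.Prime := ⟨hp⟩
  obtain ⟨P, hP⟩ := Sylow.exists_subgroup_card_pow_prime p
    (hidx ▸ H.index_dvd_card : p ^ k ∣ Nat.card G)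
  have hPH : P.IsComplement' H := Subgroup.isComplement'_of_coprime
    (by rw [hP, ← hidx, mul_comm, H.card_mul_index]) (by rwa [hP, ← hidx])
  exact HasOGS.of_isComplement' (IsPGroup.of_card hP).hasOGS hH hPH
end

section
/- Let G be a finite group with a subgroup H having an ordered generating system, and suppose there exist elements a₁,…,a_n of G and positive integers m₁,…,m_n with m₁⋯m_n = [G:H], such that the products a₁^{i₁}⋯a_n^{i_n} for 0 ≤ i_k < m_k lie in pairwise distinct left cosets of H. Then G has an ordered generating system. -/
open Function

section PowProd

variable {G : Type*} [Group G] {n : ℕ}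

def powProd (a : Fin n → G) {m : Fin n → ℕ} (i : (k : Fin n) → Fin (m k)) : G :=
  (List.ofFn fun k => a k ^ (i k : ℕ)).prod

theorem isOGS_iff_bijective (a : Fin n → G) (m : Fin n → ℕ) :
    IsOGS a m ↔ (∀ k, 0 < m k) ∧ Bijective (powProd a (m := m)) := by
  simp only [IsOGS, bijective_iff_existsUnique, powProd, eq_comm]

theorem Subgroup.coe_powProd {H : Subgroup G} (b : Fin n → H) {m : Fin n → ℕ}
    (i : (k : Fin n) → Fin (m k)) : ((powProd b i : H) : G) = powProd (fun k => (b k : G)) i := by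
  simp [powProd, List.map_ofFn, comp_def]

end PowProd

namespace Fin

variable {n₁ n₂ : ℕ} (m₁ : Fin n₁ → ℕ) (m₂ : Fin n₂ → ℕ)

def appendFinPiEquiv :
    ((k : Fin n₁) → Fin (m₁ k)) × ((k : Fin n₂) → Fin (m₂ k)) ≃
      ((k : Fin (n₁ + n₂)) → Fin (append m₁ m₂ k)) where
  toFun p k := addCases (motive := fun k => Fin (append m₁ m₂ k))
    (fun j => (p.1 j).cast (append_left m₁ m₂ j).symm)
    (fun j => (p.2 j).cast (append_right m₁ m₂ j).symm) k
  invFun i := (fun j => (i (castAdd n₂ j)).cast (append_left m₁ m₂ j),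
    fun j => (i (natAdd n₁ j)).cast (append_right m₁ m₂ j))
  left_inv p := by ext <;> simp
  right_inv i := by funext k; induction k using addCases <;> simp

@[simp]
theorem appendFinPiEquiv_apply_castAdd
    (p : ((k : Fin n₁) → Fin (m₁ k)) × ((k : Fin n₂) → Fin (m₂ k))) (j : Fin n₁) :
    (appendFinPiEquiv m₁ m₂ p (castAdd n₂ j) : ℕ) = p.1 j := by
  simp [appendFinPiEquiv]

@[simp]
theorem appendFinPiEquiv_apply_natAdd
    (p : ((k : Fin n₁) → Fin (m₁ k)) × ((k : Fin n₂) → Fin (m₂ k))) (j : Fin n₂) :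
    (appendFinPiEquiv m₁ m₂ p (natAdd n₁ j) : ℕ) = p.2 j := by
  simp [appendFinPiEquiv]

end Fin

section Append

variable {G : Type*} [Group G] {n₁ n₂ : ℕ} {m₁ : Fin n₁ → ℕ} {m₂ : Fin n₂ → ℕ}

theorem powProd_append (a₁ : Fin n₁ → G) (a₂ : Fin n₂ → G)
    (p : ((k : Fin n₁) → Fin (m₁ k)) × ((k : Fin n₂) → Fin (m₂ k))) :
    powProd (Fin.append a₁ a₂) (Fin.appendFinPiEquiv m₁ m₂ p) =
      powProd a₁ p.1 * powProd a₂ p.2 := by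
  rw [powProd, List.ofFn_add, List.prod_append]
  -- `List.ofFn_add` indexes the left block by `castLE`, which is `castAdd` only up to defeq.
  change (List.ofFn fun j => Fin.append a₁ a₂ (Fin.castAdd n₂ j) ^
    (Fin.appendFinPiEquiv m₁ m₂ p (Fin.castAdd n₂ j) : ℕ)).prod * _ = _
  simp [powProd]

theorem isOGS_append {a₁ : Fin n₁ → G} {a₂ : Fin n₂ → G} (hm₁ : ∀ k, 0 < m₁ k)
    (hm₂ : ∀ k, 0 < m₂ k)
    (h : Bijective fun p : ((k : Fin n₁) → Fin (m₁ k)) × ((k : Fin n₂) → Fin (m₂ k)) =>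
      powProd a₁ p.1 * powProd a₂ p.2) :
    IsOGS (Fin.append a₁ a₂) (Fin.append m₁ m₂) := by
  refine (isOGS_iff_bijective _ _).2 ⟨fun k => ?_, ?_⟩
  · induction k using Fin.addCases <;> simp [hm₁, hm₂]
  · refine ((Fin.appendFinPiEquiv m₁ m₂).bijective_comp _).1 ?_
    simpa only [comp_def, powProd_append] using h

end Append

theorem Subgroup.bijective_mul_of_bijective_mk {G : Type*} [Group G] {H : Subgroup G}
    {I J : Type*} {s : I → G} {t : J → H} (hs : Bijective fun i => (s i : G ⧸ H))
    (ht : Bijective t) : Bijective fun p : I × J => s p.1 * t p.2 := by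
  constructor
  · rintro ⟨i, j⟩ ⟨i', j'⟩ h
    have hi : i = i' := hs.1 <| by
      simpa only [QuotientGroup.mk_mul_of_mem _ (t _).2] using congrArg ((↑) : G → G ⧸ H) h
    subst hi
    simpa using ht.1 (Subtype.ext (mul_left_cancel h))
  · intro g
    obtain ⟨i, hi⟩ := hs.2 g
    obtain ⟨j, hj⟩ := ht.2 ⟨(s i)⁻¹ * g, QuotientGroup.eq.1 hi⟩
    exact ⟨(i, j), by simp [hj]⟩

theorem hasOGS_of_coset_transversal_general {G : Type*} [Group G]
    (H : Subgroup G) (hH : HasOGS H)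
    {n : ℕ} (a : Fin n → G) (m : Fin n → ℕ) (hm : ∀ k, 0 < m k)
    (hprod : ∏ k, m k = H.index)
    (hinj : Function.Injective fun i : (k : Fin n) → Fin (m k) =>
      (((List.ofFn fun k => a k ^ ((i k : ℕ))).prod : G) : G ⧸ H)) :
    HasOGS G := by
  obtain ⟨_, b, mb, hb⟩ := hH
  rw [isOGS_iff_bijective] at hb
  have : H.FiniteIndex :=
    Subgroup.finiteIndex_iff.2 (hprod ▸ Finset.prod_ne_zero_iff.2 fun k _ => (hm k).ne')
  have hcoset : Bijective fun i : (k : Fin n) → Fin (m k) => ((powProd a i : G) : G ⧸ H) :=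
    hinj.bijective_of_nat_card_le (by simp [hprod, Subgroup.index])
  refine ⟨_, _, _, isOGS_append (a₁ := a) (a₂ := fun k => (b k : G)) hm hb.1 ?_⟩
  simpa only [Subgroup.coe_powProd] using Subgroup.bijective_mul_of_bijective_mk hcoset hb.2

theorem hasOGS_of_coset_transversal {G : Type*} [Group G] [Fintype G]
    (H : Subgroup G) (hH : HasOGS H)
    {n : ℕ} (a : Fin n → G) (m : Fin n → ℕ) (hm : ∀ k, 0 < m k)
    (hprod : ∏ k, m k = H.index)
    (hinj : Function.Injective fun i : (k : Fin n) → Fin (m k) =>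
      (((List.ofFn fun k => a k ^ ((i k : ℕ))).prod : G) : G ⧸ H)) :
    HasOGS G :=
  hasOGS_of_coset_transversal_general H hH a m hm hprod hinj
end
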